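/- arXiv:1808.05736 — 10 statements merged into one kernel-verified Lean document; each statement's English description precedes it below -/
import Mathlib

section
/- For all integers n ≥ k ≥ 0, the entry N_{n,k}(z) = ∑_{i=0}^{n-k} ((k+1)/(n+1)) C(n+1,i) C(n+1,i+k+1) z^i satisfies the recurrence N_{n,k}(z) = N_{n-1,k-1}(z) + (z+1) N_{n-1,k}(z) + z N_{n-1,k+1}(z) for n,k ≥ 1, together with N_{0,0}(z)=1, N_{n,0}(z) = (z+1) N_{n-1,0}(z) + z N_{n-1,1}(z) for n ≥ 1, and N_{n,k}(z)=0 for k > n. -/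
/-!
Writing `P n k = ∑ᵢ C(n,i) C(n,i+k) zⁱ`, Pascal's rule on both factors shows that `P` obeys the
recurrence of the statement, with boundary term `P n (-1) = z P n 1`. The coefficients of `N n k` are the
2 × 2 binomial determinants `C(n,i) C(n,i+k) - C(n,i-1) C(n,i+k+1)` (by
`(n+1) C(n,m) = (m+1) C(n+1,m+1)` and Pascal), i.e. `N n k = P n k - z P n (k+2)`,
and the recurrence is linear with coefficients in `ℚ[z]`, so it passes from `P` to `N`.
-/

open Polynomial Finset

/-- The generalized Narayana triangle entry, defined by the explicit
double-binomial sum `N_{n,k}(z) = ∑_{i=0}^{n-k} ((k+1)/(n+1)) C(n+1,i) C(n+1,i+k+1) z^i`. -/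
noncomputable def Nray (n k : ℕ) : Polynomial ℚ :=
  ∑ i ∈ Finset.range (n - k + 1),
    Polynomial.C (((k : ℚ) + 1) / ((n : ℚ) + 1) * ((n + 1).choose i) * ((n + 1).choose (i + k + 1)))
      * Polynomial.X ^ i

variable (R : Type*) [CommSemiring R]

noncomputable def choosePairPoly (n k : ℕ) : R[X] :=
  ∑ i ∈ range (n + 1), C ((n.choose i * n.choose (i + k) : ℕ) : R) * X ^ i

variable {R}

theorem coeff_choosePairPoly (n k m : ℕ) :
    (choosePairPoly R n k).coeff m = n.choose m * n.choose (m + k) := by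
  rw [choosePairPoly, finsetSum_coeff]
  simp only [coeff_C_mul_X_pow, Finset.sum_ite_eq, mem_range]
  split_ifs
  · push_cast; rfl
  · rw [Nat.choose_eq_zero_of_lt (by omega)]; simp

theorem choosePairPoly_succ_zero (n : ℕ) :
    choosePairPoly R (n + 1) 0
      = (X + 1) * choosePairPoly R n 0 + 2 * X * choosePairPoly R n 1 := by
  ext (_ | m)
  · simp [coeff_choosePairPoly]
  · simp only [coeff_add, add_mul, one_mul, mul_assoc, coeff_X_mul, coeff_ofNat_mul,
      coeff_choosePairPoly, Nat.choose_succ_succ', Nat.add_zero]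
    push_cast
    ring

theorem choosePairPoly_succ_succ (n k : ℕ) :
    choosePairPoly R (n + 1) (k + 1)
      = choosePairPoly R n k + (X + 1) * choosePairPoly R n (k + 1)
        + X * choosePairPoly R n (k + 2) := by
  ext (_ | m)
  · simp [coeff_choosePairPoly, Nat.choose_succ_succ', add_comm]
  · simp only [coeff_add, add_mul, one_mul, coeff_X_mul, coeff_choosePairPoly,
      Nat.choose_succ_succ', ← add_assoc, show m + 1 + k = m + k + 1 by omega]
    push_cast
    ring

theorem cast_choose_eq_div_mul_choose_succ {K : Type*} [Field K] [CharZero K] (n m : ℕ) :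
    (n.choose m : K) = (m + 1) / (n + 1) * (n + 1).choose (m + 1) := by
  rw [div_mul_eq_mul_div, eq_div_iff n.cast_add_one_ne_zero]
  exact_mod_cast (mul_comm _ _).trans ((Nat.add_one_mul_choose_eq n m).trans (mul_comm _ _))

theorem coeff_Nray (n k m : ℕ) :
    (Nray n k).coeff m
      = (k + 1) / (n + 1) * (n + 1).choose m * (n + 1).choose (m + k + 1) := by
  rw [Nray, finsetSum_coeff]
  simp only [coeff_C_mul_X_pow, Finset.sum_ite_eq, mem_range]
  split_ifs
  · rfl
  · rw [Nat.choose_eq_zero_of_lt (n := n + 1) (k := m + k + 1) (by omega)]; simp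

theorem Nray_eq_choosePairPoly_sub (n k : ℕ) :
    Nray n k = choosePairPoly ℚ n k - X * choosePairPoly ℚ n (k + 2) := by
  ext (_ | m)
  · rw [coeff_Nray, coeff_sub, mul_coeff_zero, coeff_choosePairPoly,
      cast_choose_eq_div_mul_choose_succ n (0 + k)]
    simp
  · have pascal (a : ℕ) : (n.choose (a + 1) : ℚ) = (n + 1).choose (a + 1) - n.choose a := by
      rw [Nat.choose_succ_succ', Nat.cast_add]; ring
    rw [coeff_Nray, coeff_sub, coeff_X_mul, coeff_choosePairPoly, coeff_choosePairPoly,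
      show m + 1 + k = m + k + 1 by omega, show m + (k + 2) = m + k + 1 + 1 by omega,
      pascal m, pascal (m + k + 1), cast_choose_eq_div_mul_choose_succ n m,
      cast_choose_eq_div_mul_choose_succ n (m + k + 1)]
    field_simp
    push_cast
    ring

theorem stmt0 :
    Nray 0 0 = 1 ∧
    (∀ n : ℕ, Nray (n + 1) 0 = (Polynomial.X + 1) * Nray n 0 + Polynomial.X * Nray n 1) ∧
    (∀ n k : ℕ, Nray (n + 1) (k + 1)
        = Nray n k + (Polynomial.X + 1) * Nray n (k + 1) + Polynomial.X * Nray n (k + 2)) ∧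
    (∀ n k : ℕ, n < k → Nray n k = 0) := by
  refine ⟨by simp [Nray], fun n => ?_, fun n k => ?_, fun n k hnk => ?_⟩
  · simp only [Nray_eq_choosePairPoly_sub, choosePairPoly_succ_zero, choosePairPoly_succ_succ]
    ring
  · simp only [Nray_eq_choosePairPoly_sub, choosePairPoly_succ_succ]
    ring
  · ext m
    simp [coeff_Nray, Nat.choose_eq_zero_of_lt (show n + 1 < m + k + 1 by omega)]
end

section
/- Let (A_{n,k}) be the recursive matrix with A_{0,0}=1, A_{0,k}=0 for k>0, A_{n,0} = x A_{n-1,0} + z A_{n-1,1}, and A_{n,k} = A_{n-1,k-1} + y A_{n-1,k} + z A_{n-1,k+1} for n,k ≥ 1, and let (A*_{n,k}) denote the same array with x replaced by y. Then for all integers n, r ≥ 0 and m ≥ ℓ ≥ 0, with M_r = min{n+r+1, m+r-ℓ}: ∑_{k=0}^{M_r} z^k (A_{n,k} A_{m+r+1,k+ℓ+1} − A_{m,k+ℓ+1} A_{n+r+1,k}) = ∑_{i=0}^{r} A_{n+i,0} A*_{m+r-i,ℓ}. -/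
/-!
Writing `A*` through `A` as `A*_{N,L} = A_{N,L} - (x - y) A_{N,L+1}`, the identity reduces to
its case `r = 0`: for every `a, N, L`,
`∑_k z^k (A_{a,k} A_{N+1,k+L+1} - A_{N,k+L+1} A_{a+1,k}) = A_{a,0} A*_{N,L}`.
Expanding `A_{N+1,·}` and `A_{a+1,·}` by the recurrence, the terms with `k ≥ 1` telescope and
the term `k = 0` supplies the right-hand side. For general `r`, the minor
`A_{n,k} A_{m+r+1,k+ℓ+1} - A_{m,k+ℓ+1} A_{n+r+1,k}` telescopes along
`i ↦ (n + i, m + r + 1 - i)` into `r + 1` minors of that shape.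
-/

open Finset

/-- The recursive matrix with `σ = (x, y, y, …)` and `τ = (z, z, z, …)`. -/
structure IsRecursiveMatrix {R : Type*} [CommRing R] (x y z : R) (A : ℕ → ℕ → R) :
    Prop where
  zero_zero : A 0 0 = 1
  eq_zero_of_lt : ∀ n k, n < k → A n k = 0
  succ_zero : ∀ n, A (n + 1) 0 = x * A n 0 + z * A n 1
  succ_succ :
    ∀ n k, A (n + 1) (k + 1) = A n k + y * A n (k + 1) + z * A n (k + 2)

namespace IsRecursiveMatrix

variable {R : Type*} [CommRing R] {x y z : R} {A S : ℕ → ℕ → R}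

theorem eq_sub_mul_apply_succ (hS : IsRecursiveMatrix y y z S) (hA : IsRecursiveMatrix x y z A)
    (N L : ℕ) : S N L = A N L - (x - y) * A N (L + 1) := by
  induction N generalizing L with
  | zero =>
    cases L with
    | zero => rw [hS.zero_zero, hA.zero_zero, hA.eq_zero_of_lt 0 1 one_pos]; ring
    | succ l =>
      rw [hS.eq_zero_of_lt 0 (l + 1) (by omega), hA.eq_zero_of_lt 0 (l + 1) (by omega),
        hA.eq_zero_of_lt 0 (l + 2) (by omega)]
      ring
  | succ N ih =>
    cases L with
    | zero => rw [hS.succ_zero, hA.succ_zero, hA.succ_succ N 0, ih 0, ih 1]; ring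
    | succ l =>
      rw [hS.succ_succ N l, hA.succ_succ N l, hA.succ_succ N (l + 1), ih l, ih (l + 1), ih (l + 2)]
      ring

theorem sum_range_minor_eq (hA : IsRecursiveMatrix x y z A) (hS : IsRecursiveMatrix y y z S)
    (a N L B : ℕ) (hB : a + 1 < B) :
    ∑ k ∈ range B, z ^ k * (A a k * A (N + 1) (k + L + 1) - A N (k + L + 1) * A (a + 1) k)
      = A a 0 * S N L := by
  obtain ⟨B, rfl⟩ : ∃ B', B = B' + 1 := ⟨B - 1, by omega⟩
  set g : ℕ → R := fun j ↦
    z ^ (j + 1) * (A a (j + 1) * A N (j + L + 1) - A a j * A N (j + L + 2)) with hg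
  have telescoping : ∀ j ∈ range B,
      z ^ (j + 1) *
          (A a (j + 1) * A (N + 1) (j + 1 + L + 1) - A N (j + 1 + L + 1) * A (a + 1) (j + 1))
        = g j - g (j + 1) := by
    intro j _
    rw [hg, show j + 1 + L + 1 = j + L + 1 + 1 by omega, hA.succ_succ N (j + L + 1),
      hA.succ_succ a j]
    ring_nf
  have tail : g B = 0 := by
    simp only [hg]
    rw [hA.eq_zero_of_lt a (B + 1) (by omega), hA.eq_zero_of_lt a B (by omega)]
    ring
  rw [sum_range_succ', sum_congr rfl telescoping, sum_range_sub', tail]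
  simp only [hg, zero_add]
  rw [hA.succ_succ N L, hA.succ_zero, hS.eq_sub_mul_apply_succ hA]
  ring

end IsRecursiveMatrix

theorem sum_range_min_minor_eq {R : Type*} [CommRing R] {A : ℕ → ℕ → R}
    (hA : ∀ n k, n < k → A n k = 0) (z : R) (n r m ℓ : ℕ) :
    ∑ k ∈ range (min (n + r + 1) (m + r - ℓ) + 1),
        z ^ k * (A n k * A (m + r + 1) (k + ℓ + 1) - A m (k + ℓ + 1) * A (n + r + 1) k)
      = ∑ k ∈ range (n + r + 2),
        z ^ k * (A n k * A (m + r + 1) (k + ℓ + 1) - A m (k + ℓ + 1) * A (n + r + 1) k) := by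
  refine sum_subset (range_subset_range.2 (by omega)) fun k _ hk ↦ ?_
  rw [mem_range, not_lt] at hk
  rcases le_or_gt k (n + r + 1) with hkn | hkn
  · rw [hA (m + r + 1) (k + ℓ + 1) (by omega), hA m (k + ℓ + 1) (by omega)]; ring
  · rw [hA n k (by omega), hA (n + r + 1) k hkn]; ring

theorem minor_eq_sum_range_minor {R : Type*} [CommRing R] (A : ℕ → ℕ → R)
    (n r m ℓ k : ℕ) :
    A n k * A (m + r + 1) (k + ℓ + 1) - A m (k + ℓ + 1) * A (n + r + 1) k
      = ∑ i ∈ range (r + 1),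
        (A (n + i) k * A (m + r - i + 1) (k + ℓ + 1)
          - A (m + r - i) (k + ℓ + 1) * A (n + i + 1) k) := by
  have step : ∀ i ∈ range (r + 1),
      A (n + i) k * A (m + r - i + 1) (k + ℓ + 1) - A (m + r - i) (k + ℓ + 1) * A (n + i + 1) k
        = A (n + i) k * A (m + r + 1 - i) (k + ℓ + 1)
          - A (n + (i + 1)) k * A (m + r + 1 - (i + 1)) (k + ℓ + 1) := by
    intro i hi
    rw [mem_range] at hi
    rw [show m + r + 1 - i = m + r - i + 1 by omega,
      show m + r + 1 - (i + 1) = m + r - i by omega, ← add_assoc]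
    ring
  rw [sum_congr rfl step, sum_range_sub' (fun i ↦ A (n + i) k * A (m + r + 1 - i) (k + ℓ + 1)),
    show m + r + 1 - (r + 1) = m by omega, add_zero, Nat.sub_zero, ← add_assoc]
  ring

theorem stmt4_general {R : Type*} [CommRing R] (x y z : R)
    (A Astar : ℕ → ℕ → R)
    (hA00 : A 0 0 = 1) (hAtop : ∀ n k, n < k → A n k = 0)
    (hA0 : ∀ n, A (n + 1) 0 = x * A n 0 + z * A n 1)
    (hA : ∀ n k, A (n + 1) (k + 1) = A n k + y * A n (k + 1) + z * A n (k + 2))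
    (hS00 : Astar 0 0 = 1) (hStop : ∀ n k, n < k → Astar n k = 0)
    (hS0 : ∀ n, Astar (n + 1) 0 = y * Astar n 0 + z * Astar n 1)
    (hS : ∀ n k, Astar (n + 1) (k + 1) = Astar n k + y * Astar n (k + 1) + z * Astar n (k + 2))
    (n r m ℓ : ℕ) :
    ∑ k ∈ Finset.range (min (n + r + 1) (m + r - ℓ) + 1),
        z ^ k * (A n k * A (m + r + 1) (k + ℓ + 1) - A m (k + ℓ + 1) * A (n + r + 1) k)
      = ∑ i ∈ Finset.range (r + 1), A (n + i) 0 * Astar (m + r - i) ℓ := by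
  have hArec : IsRecursiveMatrix x y z A := ⟨hA00, hAtop, hA0, hA⟩
  have hSrec : IsRecursiveMatrix y y z Astar := ⟨hS00, hStop, hS0, hS⟩
  rw [sum_range_min_minor_eq hAtop]
  simp_rw [minor_eq_sum_range_minor A n r m ℓ, mul_sum]
  rw [sum_comm]
  refine sum_congr rfl fun i hi ↦ ?_
  rw [mem_range] at hi
  exact hArec.sum_range_minor_eq hSrec (n + i) (m + r - i) ℓ (n + r + 2) (by omega)

/-- Theorem 1.3 (main theorem 1): weighted sums of 2×2 minors of the recursive matrix
for `σ = (x,y,y,…)`, `τ = (z,z,z,…)`. -/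
theorem stmt4 {R : Type*} [CommRing R] (x y z : R)
    (A Astar : ℕ → ℕ → R)
    (hA00 : A 0 0 = 1) (hAtop : ∀ n k, n < k → A n k = 0)
    (hA0 : ∀ n, A (n + 1) 0 = x * A n 0 + z * A n 1)
    (hA : ∀ n k, A (n + 1) (k + 1) = A n k + y * A n (k + 1) + z * A n (k + 2))
    (hS00 : Astar 0 0 = 1) (hStop : ∀ n k, n < k → Astar n k = 0)
    (hS0 : ∀ n, Astar (n + 1) 0 = y * Astar n 0 + z * Astar n 1)
    (hS : ∀ n k, Astar (n + 1) (k + 1) = Astar n k + y * Astar n (k + 1) + z * Astar n (k + 2))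
    (n r m ℓ : ℕ) (hml : ℓ ≤ m) :
    ∑ k ∈ Finset.range (min (n + r + 1) (m + r - ℓ) + 1),
        z ^ k * (A n k * A (m + r + 1) (k + ℓ + 1) - A m (k + ℓ + 1) * A (n + r + 1) k)
      = ∑ i ∈ Finset.range (r + 1), A (n + i) 0 * Astar (m + r - i) ℓ :=
  stmt4_general x y z A Astar hA00 hAtop hA0 hA hS00 hStop hS0 hS n r m ℓ
end

section
/- Let (A_{n,k}) be the recursive matrix with A_{0,0}=1, A_{n,k} = A_{n-1,k-1} + y A_{n-1,k} + z A_{n-1,k+1} for n ≥ 1 (with A_{n,k}=0 for k<0 or k>n). Then for all integers m ≥ n ≥ 0 and all integers r with n + r ≥ 0: ∑_{k=0}^{m} z^k (A_{n,k} A_{m+r,k+1} + A_{n+r,k+1} A_{m,k}) = A_{m+n+r,1} + H_{n,m}(r), where H_{n,m}(r) = ∑_{i=0}^{r-1} A_{n+i,0} A_{m+r-i-1,0} if r ≥ 1, H_{n,m}(0) = 0, and H_{n,m}(r) = −∑_{i=1}^{|r|} A_{n-i,0} A_{m-|r|+i-1,0} if r ≤ −1. -/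
/-!
Write `a j = A j 0`. The weighted sum `∑ₖ zᵏ A n k A p (k+1)` does not change when one row
index is moved from `p` to `n`, up to the correction `a n * a p`: after expanding both sides with
the recurrence, the difference telescopes. Moving all of `p` over to `n` gives the convolution
`∑_{j<p} a j * a (n+p-1-j)`; for `n = 0` this computes `A s 1` as the full convolution of
length `s`. Both sums in the theorem are then partial convolutions of the same length
`S = m+n+r`, and the convolution is symmetric under `j ↦ S-1-j`, so the two partial sums
combine into the full one plus the boundary term `H_{n,m}(r)`.
-/

open Finset

theorem sum_range_conv_add_sum_range_conv {R : Type*} [CommSemiring R] (a : ℕ → R)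
    {p q S : ℕ} (hS : p + q = S) :
    ∑ j ∈ range p, a j * a (S - 1 - j) + ∑ j ∈ range q, a j * a (S - 1 - j)
      = ∑ j ∈ range S, a j * a (S - 1 - j) := by
  subst hS
  rw [sum_range_add, ← sum_range_reflect _ q]
  congr 1
  refine sum_congr rfl fun j hj => ?_
  have hj := mem_range.1 hj
  rw [mul_comm]
  congr 2 <;> omega

theorem sum_range_conv_add_sum_range_conv_of_add_eq {R : Type*} [CommSemiring R] (a : ℕ → R)
    {n m t S : ℕ} (hS : n + m + t = S) :
    ∑ j ∈ range (m + t), a j * a (S - 1 - j) + ∑ j ∈ range (n + t), a j * a (S - 1 - j)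
      = ∑ j ∈ range S, a j * a (S - 1 - j)
        + ∑ i ∈ range t, a (n + i) * a (m + t - i - 1) := by
  have hboundary : ∑ i ∈ range t, a (n + i) * a (S - 1 - (n + i))
      = ∑ i ∈ range t, a (n + i) * a (m + t - i - 1) :=
    sum_congr rfl fun i hi => by
      have := mem_range.1 hi
      congr 2; omega
  rw [sum_range_add _ n, ← sum_range_conv_add_sum_range_conv a (by omega : m + t + n = S),
    hboundary]
  ring

theorem sum_range_conv_add_sum_range_conv_of_eq_add {R : Type*} [CommRing R] (a : ℕ → R)
    {n m t S : ℕ} (htn : t ≤ n) (htm : t ≤ m) (hS : n + m = S + t) :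
    ∑ j ∈ range (m - t), a j * a (S - 1 - j) + ∑ j ∈ range (n - t), a j * a (S - 1 - j)
      = ∑ j ∈ range S, a j * a (S - 1 - j)
        + -∑ i ∈ range t, a (n - (i + 1)) * a (m - t + i) := by
  have hboundary : ∑ i ∈ range t, a (n - t + i) * a (S - 1 - (n - t + i))
      = ∑ i ∈ range t, a (n - (i + 1)) * a (m - t + i) := by
    rw [← sum_range_reflect]
    refine sum_congr rfl fun i hi => ?_
    have := mem_range.1 hi
    congr 2 <;> omega
  have hsplit := sum_range_conv_add_sum_range_conv a (by omega : m - t + n = S)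
  rw [show n = n - t + t by omega, sum_range_add, hboundary] at hsplit
  rw [← hsplit]
  ring

section RecursiveMatrix

variable {R : Type*} [CommRing R] {y z : R} {A : ℕ → ℕ → R}

theorem sum_range_pow_mul_mul_exchange
    (hAtop : ∀ n k, n < k → A n k = 0)
    (hA0 : ∀ n, A (n + 1) 0 = y * A n 0 + z * A n 1)
    (hA : ∀ n k, A (n + 1) (k + 1) = A n k + y * A n (k + 1) + z * A n (k + 2))
    {n M : ℕ} (hM : n < M) (p : ℕ) :
    ∑ k ∈ range (M + 1), z ^ k * (A n k * A (p + 1) (k + 1))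
      = ∑ k ∈ range (M + 1), z ^ k * (A (n + 1) k * A p (k + 1)) + A n 0 * A p 0 := by
  set W : ℕ → R := fun k => z ^ k * (A n k * A p k)
  set U : ℕ → R := fun k => z ^ (k + 1) * (A n k * A p (k + 2))
  have hzero : z ^ 0 * (A n 0 * A (p + 1) (0 + 1)) - z ^ 0 * (A (n + 1) 0 * A p (0 + 1))
      = W 0 - W 1 + U 0 := by
    simp only [W, U, hA0, hA p 0]
    ring
  have hsucc : ∀ k, z ^ (k + 1) * (A n (k + 1) * A (p + 1) (k + 1 + 1))
        - z ^ (k + 1) * (A (n + 1) (k + 1) * A p (k + 1 + 1))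
      = (W (k + 1) - W (k + 2)) + (U (k + 1) - U k) := by
    intro k
    simp only [W, U, hA n k, hA p (k + 1)]
    ring
  have hW : W (M + 1) = 0 := by simp [W, hAtop n (M + 1) (by omega)]
  have hU : U M = 0 := by simp [U, hAtop n M hM]
  rw [← sub_eq_iff_eq_add', ← sum_sub_distrib, sum_range_succ', hzero,
    sum_congr rfl fun k _ => hsucc k, sum_add_distrib,
    sum_range_sub' (fun k => W (k + 1)), sum_range_sub U, hW, hU]
  ring

theorem sum_range_pow_mul_mul_eq_conv
    (hAtop : ∀ n k, n < k → A n k = 0)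
    (hA0 : ∀ n, A (n + 1) 0 = y * A n 0 + z * A n 1)
    (hA : ∀ n k, A (n + 1) (k + 1) = A n k + y * A n (k + 1) + z * A n (k + 2))
    (p : ℕ) {n N : ℕ} (hN : n < N) :
    ∑ k ∈ range N, z ^ k * (A n k * A p (k + 1))
      = ∑ j ∈ range p, A j 0 * A (n + p - 1 - j) 0 := by
  induction p generalizing n N with
  | zero => simp [hAtop 0 _ (Nat.succ_pos _)]
  | succ p ih =>
    have htrunc : ∑ k ∈ range N, z ^ k * (A n k * A (p + 1) (k + 1))
        = ∑ k ∈ range (N + 1), z ^ k * (A n k * A (p + 1) (k + 1)) := by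
      simp [sum_range_succ, hAtop n N hN]
    rw [htrunc, sum_range_pow_mul_mul_exchange hAtop hA0 hA hN, ih (by omega : n + 1 < N + 1),
      sum_range_succ, show n + 1 + p = n + (p + 1) by omega,
      show n + (p + 1) - 1 - p = n by omega, mul_comm (A n 0)]

theorem col_one_eq_conv
    (hA00 : A 0 0 = 1)
    (hAtop : ∀ n k, n < k → A n k = 0)
    (hA0 : ∀ n, A (n + 1) 0 = y * A n 0 + z * A n 1)
    (hA : ∀ n k, A (n + 1) (k + 1) = A n k + y * A n (k + 1) + z * A n (k + 2)) (s : ℕ) :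
    A s 1 = ∑ j ∈ range s, A j 0 * A (s - 1 - j) 0 := by
  simpa [hA00] using sum_range_pow_mul_mul_eq_conv hAtop hA0 hA s zero_lt_one

end RecursiveMatrix

/-- Theorem 1.4 (main theorem 2): weighted sums of 2×2 permanents of the recursive matrix
for `σ = (y,y,y,…)`, `τ = (z,z,z,…)`. -/
theorem stmt5 {R : Type*} [CommRing R] (y z : R)
    (A : ℕ → ℕ → R)
    (hA00 : A 0 0 = 1) (hAtop : ∀ n k, n < k → A n k = 0)
    (hA0 : ∀ n, A (n + 1) 0 = y * A n 0 + z * A n 1)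
    (hA : ∀ n k, A (n + 1) (k + 1) = A n k + y * A n (k + 1) + z * A n (k + 2))
    (n m : ℕ) (r : ℤ) (hnm : n ≤ m) (hr : 0 ≤ (n : ℤ) + r) :
    ∑ k ∈ Finset.range (m + 1),
        z ^ k * (A n k * A ((m : ℤ) + r).toNat (k + 1) + A ((n : ℤ) + r).toNat (k + 1) * A m k)
      = A ((m : ℤ) + (n : ℤ) + r).toNat 1 +
        (if 0 ≤ r then
            ∑ i ∈ Finset.range r.toNat, A (n + i) 0 * A (m + r.toNat - i - 1) 0
         else
            - ∑ i ∈ Finset.range r.natAbs, A (n - (i + 1)) 0 * A (m - r.natAbs + i) 0) := by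
  set b := ((m : ℤ) + r).toNat
  set c := ((n : ℤ) + r).toNat
  set S := ((m : ℤ) + (n : ℤ) + r).toNat
  have hnb : n + b = S := by omega
  have hmc : m + c = S := by omega
  have hsplit : ∑ k ∈ range (m + 1), z ^ k * (A n k * A b (k + 1) + A c (k + 1) * A m k)
      = ∑ k ∈ range (m + 1), z ^ k * (A n k * A b (k + 1))
        + ∑ k ∈ range (m + 1), z ^ k * (A m k * A c (k + 1)) := by
    rw [← sum_add_distrib]
    exact sum_congr rfl fun k _ => by ring
  rw [hsplit, sum_range_pow_mul_mul_eq_conv hAtop hA0 hA b (by omega : n < m + 1),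
    sum_range_pow_mul_mul_eq_conv hAtop hA0 hA c (Nat.lt_succ_self m), hnb, hmc,
    col_one_eq_conv hA00 hAtop hA0 hA S]
  split_ifs with hr0
  · rw [show b = m + r.toNat by omega, show c = n + r.toNat by omega]
    exact sum_range_conv_add_sum_range_conv_of_add_eq _ (by omega)
  · rw [show b = m - r.natAbs by omega, show c = n - r.natAbs by omega]
    exact sum_range_conv_add_sum_range_conv_of_eq_add _ (by omega) (by omega) (by omega)
end

section
/- Let s_{n,k} be defined by s_{n,n}=1, s_{n,k}=0 for k>n or k<0, and s_{n,k} = s_{n-1,k-1} + 3 s_{n-1,k} + 2 s_{n-1,k+1}. Then for all integers n, m ≥ 0: ∑_{k=0}^{m} 2^k (s_{n,k} s_{m+1,k+1} − s_{m,k+1} s_{n+1,k}) = s_n · s_m, where s_n = s_{n,0} is the n-th little Schröder number. -/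
/-!
Rows of the triangle are iterates of the tridiagonal production matrix `T` with
`(T a)ₖ = aₖ₋₁ + β aₖ + c aₖ₊₁`. For the weights `cᵏ` the weighted minor
`cᵏ (aₖ (T b)ₖ₊₁ - bₖ₊₁ (T a)ₖ)` is a telescoping difference: the `β` terms cancel, and so
do the `aₖ bₖ₊₂` and `aₖ₋₁ bₖ₊₁` terms after a shift. The sum up to `m` therefore collapses
to `a₀ b₀` as soon as `b` is supported on `[0, m]`.
-/

open Finset

variable {R : Type*} [CommRing R]

/-- The action of the tridiagonal matrix with subdiagonal `1`, diagonal `β` and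
superdiagonal `c` on a sequence (entries with negative index being zero). -/
def jacobiStep (β c : R) (a : ℕ → R) : ℕ → R
  | 0 => β * a 0 + c * a 1
  | k + 1 => a k + β * a (k + 1) + c * a (k + 2)

theorem sum_range_pow_mul_jacobiStep_minor (β c : R) (a b : ℕ → R) (N : ℕ) :
    ∑ k ∈ range (N + 1),
        c ^ k * (a k * jacobiStep β c b (k + 1) - b (k + 1) * jacobiStep β c a k)
      = a 0 * b 0 - c ^ (N + 1) * (a (N + 1) * b (N + 1) - a N * b (N + 2)) := by
  induction N with
  | zero => simp only [zero_add, sum_range_one, jacobiStep]; ring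
  | succ N ih => rw [sum_range_succ, ih]; simp only [jacobiStep]; ring

theorem stmt6_general (s : ℕ → ℕ → ℤ)
    (htop : ∀ n k, n < k → s n k = 0)
    (h0 : ∀ n, s (n + 1) 0 = 3 * s n 0 + 2 * s n 1)
    (h : ∀ n k, s (n + 1) (k + 1) = s n k + 3 * s n (k + 1) + 2 * s n (k + 2))
    (n m : ℕ) :
    ∑ k ∈ Finset.range (m + 1),
        2 ^ k * (s n k * s (m + 1) (k + 1) - s m (k + 1) * s (n + 1) k)
      = s n 0 * s m 0 := by
  have hrow : ∀ i, s (i + 1) = jacobiStep 3 2 (s i) := by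
    intro i
    funext k
    cases k with
    | zero => exact h0 i
    | succ k => exact h i k
  rw [hrow m, hrow n, sum_range_pow_mul_jacobiStep_minor, htop m (m + 1) (by omega),
    htop m (m + 2) (by omega)]
  ring

/-- Corollary 2.2: weighted sums of 2×2 minors of the little Schröder triangle. -/
theorem stmt6 (s : ℕ → ℕ → ℤ)
    (h00 : s 0 0 = 1) (htop : ∀ n k, n < k → s n k = 0)
    (h0 : ∀ n, s (n + 1) 0 = 3 * s n 0 + 2 * s n 1)
    (h : ∀ n k, s (n + 1) (k + 1) = s n k + 3 * s n (k + 1) + 2 * s n (k + 2))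
    (n m : ℕ) :
    ∑ k ∈ Finset.range (m + 1),
        2 ^ k * (s n k * s (m + 1) (k + 1) - s m (k + 1) * s (n + 1) k)
      = s n 0 * s m 0 :=
  stmt6_general s htop h0 h n m
end

section
/- Let s_{n,k} be the little Schröder triangle defined by s_{0,0}=1 and s_{n,k} = s_{n-1,k-1} + 3 s_{n-1,k} + 2 s_{n-1,k+1}. Then for all integers m ≥ n ≥ 0: ∑_{k=0}^{m} 2^k (s_{n,k} s_{m,k+1} + s_{n,k+1} s_{m,k}) = s_{m+n,1}. -/
/-!
Expanding both rows by the recurrence, the terms with coefficient `r` cancel and the rest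
telescopes: the weighted permanent sum of rows `(a + 1, b)` differs from that of rows
`(a, b + 1)` only by a boundary term, which vanishes because row `a` is supported on `[0, a]`.
So the sum is unchanged when one unit moves from `n` to `m`, and for `n = 0` it is `s m 1`;
the case `n > m` follows by symmetry of the permanents.
-/

open Finset

variable {R : Type*} [CommRing R]

def permSum (t : R) (s : ℕ → ℕ → R) (a b N : ℕ) : R :=
  ∑ k ∈ range N, t ^ k * (s a k * s b (k + 1) + s a (k + 1) * s b k)

theorem permSum_succ (t : R) (s : ℕ → ℕ → R) (a b N : ℕ) :
    permSum t s a b (N + 1)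
      = permSum t s a b N + t ^ N * (s a N * s b (N + 1) + s a (N + 1) * s b N) :=
  sum_range_succ _ _

theorem permSum_comm (t : R) (s : ℕ → ℕ → R) (a b N : ℕ) :
    permSum t s a b N = permSum t s b a N := by
  unfold permSum
  refine sum_congr rfl fun k _ => ?_
  ring

theorem permSum_succ_left_sub_succ_right {r t : R} {s : ℕ → ℕ → R}
    (h0 : ∀ n, s (n + 1) 0 = r * s n 0 + t * s n 1)
    (h : ∀ n k, s (n + 1) (k + 1) = s n k + r * s n (k + 1) + t * s n (k + 2)) (a b N : ℕ) :
    permSum t s (a + 1) b (N + 1) - permSum t s a (b + 1) (N + 1)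
      = t ^ (N + 1) * (s a (N + 2) * s b N - s a N * s b (N + 2)) := by
  induction N with
  | zero =>
    rw [permSum, permSum, sum_range_one, sum_range_one, h0 a, h0 b, h a, h b]
    ring
  | succ N ih =>
    rw [permSum_succ t s (a + 1) b (N + 1), permSum_succ t s a (b + 1) (N + 1), h a N,
      h a (N + 1), h b N, h b (N + 1)]
    linear_combination ih

theorem permSum_eq_of_lt {t : R} {s : ℕ → ℕ → R} (htop : ∀ n k, n < k → s n k = 0)
    {a N : ℕ} (b : ℕ) (haN : a < N) :
    permSum t s a b N = permSum t s a b (a + 1) :=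
  eventually_constant_sum (fun k hk => by simp [htop a k hk, htop a (k + 1) (by omega)]) haN

theorem permSum_length_succ_eq {r t : R} {s : ℕ → ℕ → R} (h00 : s 0 0 = 1)
    (htop : ∀ n k, n < k → s n k = 0)
    (h0 : ∀ n, s (n + 1) 0 = r * s n 0 + t * s n 1)
    (h : ∀ n k, s (n + 1) (k + 1) = s n k + r * s n (k + 1) + t * s n (k + 2)) (n m : ℕ) :
    permSum t s n m (n + 1) = s (m + n) 1 := by
  induction n generalizing m with
  | zero => simp [permSum, h00, htop 0 1 one_pos]
  | succ n ih =>
    have hstep := permSum_succ_left_sub_succ_right h0 h n m (n + 1)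
    rw [htop n (n + 3) (by omega), htop n (n + 1) (by omega)] at hstep
    have hshift : permSum t s n (m + 1) (n + 2) = s (m + 1 + n) 1 := by
      rw [permSum_eq_of_lt htop (m + 1) (by omega), ih]
    rw [show m + (n + 1) = m + 1 + n by omega]
    linear_combination hstep + hshift

theorem stmt7_general (s : ℕ → ℕ → ℤ)
    (h00 : s 0 0 = 1) (htop : ∀ n k, n < k → s n k = 0)
    (h0 : ∀ n, s (n + 1) 0 = 3 * s n 0 + 2 * s n 1)
    (h : ∀ n k, s (n + 1) (k + 1) = s n k + 3 * s n (k + 1) + 2 * s n (k + 2))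
    (n m : ℕ) :
    ∑ k ∈ Finset.range (m + 1),
        2 ^ k * (s n k * s m (k + 1) + s n (k + 1) * s m k)
      = s (m + n) 1 := by
  change permSum 2 s n m (m + 1) = s (m + n) 1
  rcases le_or_gt n m with hnm | hmn
  · rw [permSum_eq_of_lt htop m (by omega), permSum_length_succ_eq h00 htop h0 h]
  · rw [permSum_comm, permSum_length_succ_eq h00 htop h0 h, add_comm]

/-- Corollary 2.3: weighted sums of 2×2 permanents of the little Schröder triangle. -/
theorem stmt7 (s : ℕ → ℕ → ℤ)
    (h00 : s 0 0 = 1) (htop : ∀ n k, n < k → s n k = 0)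
    (h0 : ∀ n, s (n + 1) 0 = 3 * s n 0 + 2 * s n 1)
    (h : ∀ n k, s (n + 1) (k + 1) = s n k + 3 * s n (k + 1) + 2 * s n (k + 2))
    (n m : ℕ) (hnm : n ≤ m) :
    ∑ k ∈ Finset.range (m + 1),
        2 ^ k * (s n k * s m (k + 1) + s n (k + 1) * s m k)
      = s (m + n) 1 :=
  stmt7_general s h00 htop h0 h n m
end

section
/- Let N_{n,k}(z) be the triangle defined by N_{0,0}=1 and N_{n,k}(z) = N_{n-1,k-1}(z) + (z+1) N_{n-1,k}(z) + z N_{n-1,k+1}(z). Then for all m ≥ n ≥ 0: ∑_{k=0}^{m} z^k (N_{n,k}(z) N_{m,k+1}(z) + N_{n,k+1}(z) N_{m,k}(z)) = N_{m+n,1}(z). -/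
/-!
Row `n + 1` of the triangle is obtained from row `n` by the operator
`(T a)_k = a_(k-1) + (x + 1) a_k + x a_(k+1)`, and `T` is self-adjoint for the symmetric
bilinear form `⟪a, b⟫ = ∑ x^k (a_k b_(k+1) + a_(k+1) b_k)` on finitely supported rows, since
the difference `⟪T a, b⟫ - ⟪a, T b⟫` telescopes. Hence `⟪N_n, N_m⟫ = ⟪N_0, N_(m+n)⟫`, and
`N_0` is the unit row, which picks out the entry `N_(m+n),1`.
-/

open Polynomial Finset

section NarayanaPermanent

variable {R : Type*} [CommRing R] (x : R)

def narayanaStep (a : ℕ → R) : ℕ → R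
  | 0 => (x + 1) * a 0 + x * a 1
  | k + 1 => a k + (x + 1) * a (k + 1) + x * a (k + 2)

def narayanaPerm (M : ℕ) (a b : ℕ → R) : R :=
  ∑ k ∈ range M, x ^ k * (a k * b (k + 1) + a (k + 1) * b k)

theorem narayanaPerm_succ_of_eq_zero {M : ℕ} {a b : ℕ → R} (ha : a (M + 1) = 0)
    (hb : b (M + 1) = 0) : narayanaPerm x (M + 1) a b = narayanaPerm x M a b := by
  simp [narayanaPerm, sum_range_succ, ha, hb]

theorem narayanaPerm_of_eq_single {M : ℕ} {a : ℕ → R} (ha₀ : a 0 = 1)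
    (ha : ∀ k, a (k + 1) = 0) (b : ℕ → R) : narayanaPerm x (M + 1) a b = b 1 := by
  simp [narayanaPerm, sum_range_succ', ha, ha₀]

theorem narayanaPerm_narayanaStep_left {M : ℕ} {a b : ℕ → R} (ha : a (M + 1) = 0)
    (hb : b (M + 1) = 0) :
    narayanaPerm x M (narayanaStep x a) b = narayanaPerm x M a (narayanaStep x b) := by
  let defect : ℕ → R
    | 0 => 0
    | j + 1 => x ^ (j + 1) * (a (j + 2) * b j - a j * b (j + 2))
  have htel : ∀ k, defect (k + 1) - defect k
      = x ^ k * (narayanaStep x a k * b (k + 1) + narayanaStep x a (k + 1) * b k)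
        - x ^ k * (a k * narayanaStep x b (k + 1) + a (k + 1) * narayanaStep x b k) := by
    rintro (_ | k) <;> simp only [defect, narayanaStep] <;> ring
  have hM : defect M = 0 := by
    rcases M with _ | M
    · rfl
    · simp [defect, ha, hb]
  rw [← sub_eq_zero, narayanaPerm, narayanaPerm, ← sum_sub_distrib]
  simp_rw [← htel]
  rw [sum_range_sub, hM]
  simp [defect]

theorem narayana_succ_eq_narayanaStep (N : ℕ → ℕ → R)
    (h0 : ∀ n, N (n + 1) 0 = (x + 1) * N n 0 + x * N n 1)
    (h : ∀ n k, N (n + 1) (k + 1) = N n k + (x + 1) * N n (k + 1) + x * N n (k + 2))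
    (n : ℕ) : N (n + 1) = narayanaStep x (N n) := by
  funext k
  cases k with
  | zero => exact h0 n
  | succ k => exact h n k

end NarayanaPermanent

/-- Corollary 3.5: weighted sums of 2×2 permanents of the generalized Narayana triangle. -/
theorem stmt9 (N : ℕ → ℕ → Polynomial ℤ)
    (h00 : N 0 0 = 1) (htop : ∀ n k, n < k → N n k = 0)
    (h0 : ∀ n, N (n + 1) 0 = (Polynomial.X + 1) * N n 0 + Polynomial.X * N n 1)
    (h : ∀ n k, N (n + 1) (k + 1)
        = N n k + (Polynomial.X + 1) * N n (k + 1) + Polynomial.X * N n (k + 2))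
    (n m : ℕ) (hnm : n ≤ m) :
    ∑ k ∈ Finset.range (m + 1),
        Polynomial.X ^ k * (N n k * N m (k + 1) + N n (k + 1) * N m k)
      = N (m + n) 1 := by
  have hstep := narayana_succ_eq_narayanaStep X N h0 h
  change narayanaPerm X (m + 1) (N n) (N m) = N (m + n) 1
  induction n generalizing m with
  | zero => exact narayanaPerm_of_eq_single X h00 (fun k => htop 0 (k + 1) k.succ_pos) _
  | succ n ih =>
    calc narayanaPerm X (m + 1) (N (n + 1)) (N m)
        = narayanaPerm X (m + 1) (N n) (N (m + 1)) := by
          rw [hstep, hstep, narayanaPerm_narayanaStep_left X (htop n (m + 2) (by omega))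
            (htop m (m + 2) (by omega))]
      _ = narayanaPerm X (m + 2) (N n) (N (m + 1)) :=
          (narayanaPerm_succ_of_eq_zero X (htop n (m + 2) (by omega))
            (htop (m + 1) (m + 2) (by omega))).symm
      _ = N (m + (n + 1)) 1 := by rw [ih (m + 1) (by omega), Nat.add_right_comm, add_assoc]
end

section
/- Define F_{m,n}(z) = ∑_{k=0}^{n} (−z)^k (N_{n,k}(z) N_{m,k+1}(z) − N_{n,k+1}(z) N_{m,k}(z)), where N_{n,k}(z) is the generalized Narayana triangle. Then F_{m,n}(z) satisfies the recurrence F_{m,n}(z) = 2(z+1) F_{m−1,n}(z) − F_{m−1,n+1}(z) for m ≥ n+1, with F_{n,n}(z) = 0. -/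
open Polynomial Finset

/-!
Write `W_k(a, b) = N_{a,k} N_{b,k+1} - N_{a,k+1} N_{b,k}` for the `2 × 2` minors of rows `a`, `b`.
Expanding rows `a + 1` and `b + 1` by the recurrence, the weighted minor
`(-z)^k (W_k(a, b+1) + W_k(a+1, b))` equals `2(z+1) (-z)^k W_k(a, b)` up to a telescoping
difference `D_k - D_{k+1}` with `D_{k+1} = (-z)^{k+1} (N_{a,k} N_{b,k+2} - N_{a,k+2} N_{b,k})`.
Summing over `k ≤ a`, the leftover `D_{a+1}` is exactly the extra top term of `F_{b,a+1}`,
because `N_{a,k}` vanishes above the diagonal.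
-/

section NarayanaMinors

variable {R : Type*} [CommRing R] (N : ℕ → ℕ → R) (z : R)

def weightedMinor (a b k : ℕ) : R :=
  (-z) ^ k * (N a k * N b (k + 1) - N a (k + 1) * N b k)

def minorDefect (a b : ℕ) : ℕ → R
  | 0 => 0
  | j + 1 => (-z) ^ (j + 1) * (N a j * N b (j + 2) - N a (j + 2) * N b j)

theorem weightedMinor_self (a k : ℕ) : weightedMinor N z a a k = 0 := by
  unfold weightedMinor
  ring

variable {N z}

theorem weightedMinor_succ_add_succ (h0 : ∀ n, N (n + 1) 0 = (z + 1) * N n 0 + z * N n 1)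
    (h : ∀ n k, N (n + 1) (k + 1) = N n k + (z + 1) * N n (k + 1) + z * N n (k + 2))
    (a b k : ℕ) :
    weightedMinor N z a (b + 1) k + weightedMinor N z (a + 1) b k
      = 2 * (z + 1) * weightedMinor N z a b k
        + (minorDefect N z a b k - minorDefect N z a b (k + 1)) := by
  cases k with
  | zero =>
    simp only [weightedMinor, minorDefect, h0, h]
    ring
  | succ j =>
    simp only [weightedMinor, minorDefect, h]
    ring

theorem sum_weightedMinor_succ_add_succ (h0 : ∀ n, N (n + 1) 0 = (z + 1) * N n 0 + z * N n 1)
    (h : ∀ n k, N (n + 1) (k + 1) = N n k + (z + 1) * N n (k + 1) + z * N n (k + 2))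
    (a b L : ℕ) :
    ∑ k ∈ range L, weightedMinor N z a (b + 1) k
        + ∑ k ∈ range L, weightedMinor N z (a + 1) b k
      = 2 * (z + 1) * ∑ k ∈ range L, weightedMinor N z a b k - minorDefect N z a b L := by
  have htelescope := sum_range_sub' (minorDefect N z a b) L
  rw [minorDefect] at htelescope
  rw [← sum_add_distrib, mul_sum, sum_congr rfl fun k _ => weightedMinor_succ_add_succ h0 h a b k,
    sum_add_distrib, htelescope, zero_sub, sub_eq_add_neg]

theorem weightedMinor_diag_succ_eq_minorDefect
    (h : ∀ n k, N (n + 1) (k + 1) = N n k + (z + 1) * N n (k + 1) + z * N n (k + 2))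
    (htop : ∀ n k, n < k → N n k = 0) (a b : ℕ) :
    weightedMinor N z (a + 1) b (a + 1) = minorDefect N z a b (a + 1) := by
  have h1 := htop a (a + 1) (by omega)
  have h2 := htop a (a + 2) (by omega)
  have h3 := htop (a + 1) (a + 2) (by omega)
  simp only [weightedMinor, minorDefect, h a a, h1, h2, h3]
  ring

theorem sum_weightedMinor_recurrence (h0 : ∀ n, N (n + 1) 0 = (z + 1) * N n 0 + z * N n 1)
    (h : ∀ n k, N (n + 1) (k + 1) = N n k + (z + 1) * N n (k + 1) + z * N n (k + 2))
    (htop : ∀ n k, n < k → N n k = 0) (a b : ℕ) :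
    ∑ k ∈ range (a + 1), weightedMinor N z a (b + 1) k
      = 2 * (z + 1) * ∑ k ∈ range (a + 1), weightedMinor N z a b k
        - ∑ k ∈ range (a + 2), weightedMinor N z (a + 1) b k := by
  have hsum := sum_weightedMinor_succ_add_succ h0 h a b (a + 1)
  rw [sum_range_succ _ (a + 1), weightedMinor_diag_succ_eq_minorDefect h htop]
  linear_combination hsum

end NarayanaMinors

theorem stmt10_general (N : ℕ → ℕ → Polynomial ℤ)
    (htop : ∀ n k, n < k → N n k = 0)
    (h0 : ∀ n, N (n + 1) 0 = (Polynomial.X + 1) * N n 0 + Polynomial.X * N n 1)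
    (h : ∀ n k, N (n + 1) (k + 1)
        = N n k + (Polynomial.X + 1) * N n (k + 1) + Polynomial.X * N n (k + 2))
    (F : ℕ → ℕ → Polynomial ℤ)
    (hF : ∀ m n, F m n = ∑ k ∈ Finset.range (n + 1),
        (-Polynomial.X) ^ k * (N n k * N m (k + 1) - N n (k + 1) * N m k)) :
    (∀ n, F n n = 0) ∧
    (∀ m n, n ≤ m → F (m + 1) n = 2 * (Polynomial.X + 1) * F m n - F m (n + 1)) := by
  have hF_minor : ∀ m n, F m n = ∑ k ∈ range (n + 1), weightedMinor N X n m k := hF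
  refine ⟨fun n => ?_, fun m n _ => ?_⟩
  · simp only [hF_minor, weightedMinor_self, sum_const_zero]
  · simpa only [hF_minor] using sum_weightedMinor_recurrence h0 h htop n m

/-- Theorem 3.6, recurrence part: `F_{m,n}(z) = 2(z+1) F_{m-1,n}(z) - F_{m-1,n+1}(z)`
for `m ≥ n+1`, with `F_{n,n}(z) = 0`. -/
theorem stmt10 (N : ℕ → ℕ → Polynomial ℤ)
    (h00 : N 0 0 = 1) (htop : ∀ n k, n < k → N n k = 0)
    (h0 : ∀ n, N (n + 1) 0 = (Polynomial.X + 1) * N n 0 + Polynomial.X * N n 1)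
    (h : ∀ n k, N (n + 1) (k + 1)
        = N n k + (Polynomial.X + 1) * N n (k + 1) + Polynomial.X * N n (k + 2))
    (F : ℕ → ℕ → Polynomial ℤ)
    (hF : ∀ m n, F m n = ∑ k ∈ Finset.range (n + 1),
        (-Polynomial.X) ^ k * (N n k * N m (k + 1) - N n (k + 1) * N m k)) :
    (∀ n, F n n = 0) ∧
    (∀ m n, n ≤ m → F (m + 1) n = 2 * (Polynomial.X + 1) * F m n - F m (n + 1)) :=
  stmt10_general N htop h0 h F hF
end

section
/- With F_{m,n}(z) = ∑_{k=0}^{n} (−z)^k (N_{n,k}(z) N_{m,k+1}(z) − N_{n,k+1}(z) N_{m,k}(z)) built from the generalized Narayana triangle, one has F_{n+1,n}(z) = N_n(z^2) for all n ≥ 0, where N_n is the n-th Narayana polynomial. -/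
/-!
Let `A` be the transfer operator of the triangle on sequences indexed by the height `k`, so that
the `n`-th row is `Aⁿ e₀` and `F_{m,n} = ⟨Aⁿ e₀, Aᵐ e₀⟩` for the skew form
`⟨u, v⟩ = ∑ₖ (-z)ᵏ (u_k v_{k+1} - u_{k+1} v_k)`. A telescoping computation shows that `A` has
adjoint `B = 2(z+1) - A` for this form, and `⟨e₀, v⟩ = v₁`, so `F_{n+1,n} = ((BA)ⁿ A e₀)₁`.
Since `BA = (z+1)² - (A - (z+1))²`, on odd heights and after the sign twist
`j ↦ (-1)ʲ u_{2j+1}` it acts as the transfer operator with parameter `z²`, while `A e₀` twists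
to `e₀`. Hence `F_{n+1,n}(z) = N_{n,0}(z²)`. Finally `N_{n,0} = N_n`, by the reflection-principle
formula `N_{n,k} = W_{n,k} - z W_{n,k+2}`, where `W_{n,k} = ∑ᵢ C(n,i) C(n,k+i) zⁱ` counts
unrestricted walks.
-/

open Polynomial Finset

/-- The `n`-th Narayana polynomial. -/
noncomputable def nar (n : ℕ) : Polynomial ℚ :=
  ∑ i ∈ Finset.range (n + 1),
    Polynomial.C ((1 : ℚ) / ((n : ℚ) + 1) * ((n + 1).choose i) * ((n + 1).choose (i + 1)))
      * Polynomial.X ^ i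

namespace NarayanaTriangle

section CommRing

variable {R : Type*} [CommRing R]

def step (z : R) : Module.End R (ℕ → R) where
  toFun u
    | 0 => (z + 1) * u 0 + z * u 1
    | k + 1 => u k + (z + 1) * u (k + 1) + z * u (k + 2)
  map_add' u v := by
    funext k
    cases k <;> simp only [Pi.add_apply] <;> ring
  map_smul' c u := by
    funext k
    cases k <;> simp only [Pi.smul_apply, smul_eq_mul, RingHom.id_apply] <;> ring

@[simp]
theorem step_apply_zero (z : R) (u : ℕ → R) : step z u 0 = (z + 1) * u 0 + z * u 1 := rfl

@[simp]
theorem step_apply_succ (z : R) (u : ℕ → R) (k : ℕ) :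
    step z u (k + 1) = u k + (z + 1) * u (k + 1) + z * u (k + 2) := rfl

def stepAdjoint (z : R) : Module.End R (ℕ → R) := (2 * (z + 1)) • 1 - step z

@[simp]
theorem stepAdjoint_apply (z : R) (v : ℕ → R) (k : ℕ) :
    stepAdjoint z v k = 2 * (z + 1) * v k - step z v k := rfl

theorem commute_stepAdjoint_step (z : R) : Commute (stepAdjoint z) (step z) :=
  ((Commute.one_left _).smul_left _).sub_left (Commute.refl _)

theorem eq_step_pow_single {z : R} {N : ℕ → ℕ → R} (h00 : N 0 0 = 1)
    (h0succ : ∀ k, N 0 (k + 1) = 0)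
    (h0 : ∀ n, N (n + 1) 0 = (z + 1) * N n 0 + z * N n 1)
    (h : ∀ n k, N (n + 1) (k + 1) = N n k + (z + 1) * N n (k + 1) + z * N n (k + 2))
    (n : ℕ) : N n = (step z ^ n) (Pi.single 0 1) := by
  induction n with
  | zero => funext k; cases k <;> simp [h00, h0succ]
  | succ n ih =>
    rw [pow_succ', Module.End.mul_apply, ← ih]
    funext k
    cases k
    · exact h0 n
    · exact h n _

theorem step_pow_single_apply_of_lt (z : R) {n k : ℕ} (hnk : n < k) :
    (step z ^ n) (Pi.single 0 1) k = 0 := by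
  induction n generalizing k with
  | zero => simp [hnk.ne']
  | succ n ih =>
    obtain ⟨k, rfl⟩ := Nat.exists_eq_add_one_of_ne_zero (by omega : k ≠ 0)
    rw [pow_succ', Module.End.mul_apply, step_apply_succ, ih (by omega), ih (by omega),
      ih (by omega)]
    ring

theorem map_step_pow_single {S : Type*} [CommRing S] (φ : R →+* S) (z : R) (n k : ℕ) :
    φ ((step z ^ n) (Pi.single 0 1) k) = (step (φ z) ^ n) (Pi.single 0 1) k := by
  induction n generalizing k with
  | zero => rcases k with _ | k <;> simp
  | succ n ih => rcases k with _ | k <;> simp [pow_succ', ih]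

def skewPairing (z : R) (K : ℕ) (u v : ℕ → R) : R :=
  ∑ k ∈ range K, (-z) ^ k * (u k * v (k + 1) - u (k + 1) * v k)

theorem skewPairing_of_le {z : R} {K K' : ℕ} {u : ℕ → R} (hu : ∀ k, K ≤ k → u k = 0)
    (hK : K ≤ K') (v : ℕ → R) : skewPairing z K' u v = skewPairing z K u v := by
  refine (sum_subset (range_subset_range.2 hK) fun k _ hk => ?_).symm
  rw [mem_range, not_lt] at hk
  rw [hu k hk, hu (k + 1) (by omega)]
  ring

theorem skewPairing_step_left {z : R} {K : ℕ} {u : ℕ → R} (hu : ∀ k, K ≤ k → u k = 0)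
    (v : ℕ → R) :
    skewPairing z (K + 1) (step z u) v = skewPairing z (K + 1) u (stepAdjoint z v) := by
  -- the difference of the two summands at `k` is `g k - g (k + 1)`
  let g : ℕ → R
    | 0 => 0
    | k + 1 => (-z) ^ (k + 1) * (u k * v (k + 2) - u (k + 2) * v k)
  have hterm (k : ℕ) : (-z) ^ k * (step z u k * v (k + 1) - step z u (k + 1) * v k)
      - (-z) ^ k * (u k * stepAdjoint z v (k + 1) - u (k + 1) * stepAdjoint z v k)
        = g k - g (k + 1) := by
    cases k <;> simp only [g, stepAdjoint_apply, step_apply_zero, step_apply_succ, pow_succ] <;> ring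
  rw [← sub_eq_zero, skewPairing, skewPairing, ← sum_sub_distrib, sum_congr rfl fun k _ => hterm k,
    sum_range_sub']
  simp [g, hu K le_rfl, hu (K + 2) (by omega)]

theorem skewPairing_step_pow_single (z : R) (n : ℕ) (v : ℕ → R) :
    skewPairing z (n + 1) ((step z ^ n) (Pi.single 0 1)) v = (stepAdjoint z ^ n) v 1 := by
  induction n generalizing v with
  | zero => simp [skewPairing]
  | succ n ih =>
    have hsupp (k : ℕ) (hk : n + 1 ≤ k) : (step z ^ n) (Pi.single 0 1) k = 0 :=
      step_pow_single_apply_of_lt z hk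
    rw [pow_succ', Module.End.mul_apply, skewPairing_step_left hsupp,
      skewPairing_of_le hsupp (by omega), ih, pow_succ, Module.End.mul_apply]

def oddPart : (ℕ → R) →ₗ[R] (ℕ → R) where
  toFun u j := (-1) ^ j * u (2 * j + 1)
  map_add' u v := by funext j; simp only [Pi.add_apply]; ring
  map_smul' c u := by funext j; simp only [Pi.smul_apply, smul_eq_mul, RingHom.id_apply]; ring

@[simp]
theorem oddPart_apply (u : ℕ → R) (j : ℕ) : oddPart u j = (-1) ^ j * u (2 * j + 1) := rfl

theorem step_sq_comp_oddPart (z : R) :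
    (step (z ^ 2)).comp oddPart = oddPart.comp (stepAdjoint z * step z) := by
  ext u j
  rcases j with _ | j
  · simp only [LinearMap.comp_apply, Module.End.mul_apply, oddPart_apply, stepAdjoint_apply,
      mul_zero, zero_add, step_apply_zero, step_apply_succ]
    ring
  · simp only [LinearMap.comp_apply, Module.End.mul_apply, oddPart_apply, stepAdjoint_apply,
      step_apply_succ, pow_succ, show 2 * (j + 1) = 2 * j + 1 + 1 by ring,
      show 2 * (j + 1 + 1) = 2 * j + 1 + 1 + 1 + 1 by ring]
    ring

theorem skewPairing_step_pow_succ (z : R) (n : ℕ) :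
    skewPairing z (n + 1) ((step z ^ n) (Pi.single 0 1)) ((step z ^ (n + 1)) (Pi.single 0 1))
      = (step (z ^ 2) ^ n) (Pi.single 0 1) 0 := by
  have hodd : oddPart (step z (Pi.single 0 1)) = Pi.single 0 1 := by
    funext j
    rcases j with _ | j <;> simp
  calc _ = ((stepAdjoint z * step z) ^ n) (step z (Pi.single 0 1)) 1 := by
        rw [skewPairing_step_pow_single, pow_succ, Module.End.mul_apply, ← Module.End.mul_apply,
          ← (commute_stepAdjoint_step z).mul_pow]
    _ = oddPart (((stepAdjoint z * step z) ^ n) (step z (Pi.single 0 1))) 0 := by simp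
    _ = (step (z ^ 2) ^ n) (Pi.single 0 1) 0 := by
        rw [← LinearMap.comp_apply,
          ← Module.End.commute_pow_left_of_commute (step_sq_comp_oddPart z),
          LinearMap.comp_apply, hodd]

end CommRing

noncomputable def walkPoly (n k : ℕ) : ℚ[X] :=
  ∑ i ∈ range (n + 1), monomial i ((n.choose i : ℚ) * n.choose (k + i))

theorem coeff_walkPoly (n k i : ℕ) : (walkPoly n k).coeff i = n.choose i * n.choose (k + i) := by
  simp only [walkPoly, finsetSum_coeff, coeff_monomial, sum_ite_eq', mem_range]
  split_ifs with hi
  · rfl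
  · simp [Nat.choose_eq_zero_of_lt (by omega : n < i)]

theorem walkPoly_succ_zero (n : ℕ) :
    walkPoly (n + 1) 0 = (X + 1) * walkPoly n 0 + 2 * X * walkPoly n 1 := by
  ext i
  rcases i with _ | i
  · simp [coeff_walkPoly]
  · simp only [add_mul, one_mul, mul_assoc, coeff_add, coeff_X_mul, coeff_ofNat_mul,
      coeff_walkPoly, zero_add, add_comm 1 i, Nat.choose_succ_succ']
    push_cast
    ring

theorem walkPoly_succ_succ (n k : ℕ) :
    walkPoly (n + 1) (k + 1)
      = walkPoly n k + (X + 1) * walkPoly n (k + 1) + X * walkPoly n (k + 2) := by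
  ext i
  rcases i with _ | i
  · simp [coeff_walkPoly, Nat.choose_succ_succ']
  · simp only [add_mul, one_mul, coeff_add, coeff_X_mul, coeff_walkPoly]
    rw [show k + 1 + (i + 1) = k + i + 1 + 1 by ring, show k + (i + 1) = k + i + 1 by ring,
      show k + 1 + i = k + i + 1 by ring, show k + 2 + i = k + i + 1 + 1 by ring,
      Nat.choose_succ_succ', Nat.choose_succ_succ' n (k + i + 1)]
    push_cast
    ring

noncomputable def row (n : ℕ) : ℕ → ℚ[X] := fun k => walkPoly n k - X * walkPoly n (k + 2)

theorem row_zero : row 0 = Pi.single 0 1 := by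
  funext k
  rcases k with _ | k <;> simp [row, walkPoly]

theorem step_X_row (n : ℕ) : step X (row n) = row (n + 1) := by
  funext k
  rcases k with _ | k
  · simp only [step_apply_zero, row, walkPoly_succ_zero, walkPoly_succ_succ]
    ring
  · simp only [step_apply_succ, row, walkPoly_succ_succ]
    ring

theorem step_X_pow_single (n : ℕ) : (step X ^ n) (Pi.single 0 1) = row n := by
  induction n with
  | zero => exact row_zero.symm
  | succ n ih => rw [pow_succ', Module.End.mul_apply, ih, step_X_row]

theorem choose_sq_sub_choose_mul_choose (n i : ℕ) :
    (n.choose (i + 1) : ℚ) ^ 2 - n.choose i * n.choose (i + 2)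
      = 1 / (n + 1) * (n + 1).choose (i + 1) * (n + 1).choose (i + 2) := by
  rcases lt_or_ge n (i + 1) with hn | hn
  · simp [Nat.choose_eq_zero_of_lt hn, Nat.choose_eq_zero_of_lt (by omega : n < i + 2),
      Nat.choose_eq_zero_of_lt (by omega : n + 1 < i + 2)]
  obtain ⟨m, rfl⟩ := Nat.exists_eq_add_of_le hn
  have r1 := Nat.choose_succ_right_eq (i + 1 + m) (i + 1)
  have r2 := Nat.choose_succ_right_eq (i + 1 + m) i
  have r3 := Nat.add_one_mul_choose_eq (i + 1 + m) (i + 1)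
  have r4 := Nat.choose_mul_succ_eq (i + 1 + m) (i + 1)
  rw [show i + 1 + m - (i + 1) = m by omega] at r1
  rw [show i + 1 + m - i = m + 1 by omega] at r2
  rw [show i + 1 + m + 1 - (i + 1) = m + 1 by omega] at r4
  set a := (i + 1 + m).choose i
  set c := (i + 1 + m).choose (i + 1)
  set b := (i + 1 + m).choose (i + 2)
  set p := (i + 1 + m + 1).choose (i + 1)
  set q := (i + 1 + m + 1).choose (i + 2)
  have r1 : (b : ℚ) * (i + 2) = c * m := by exact_mod_cast r1
  have r2 : (c : ℚ) * (i + 1) = a * (m + 1) := by exact_mod_cast r2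
  have r3 : ((i + 1 + m + 1 : ℕ) : ℚ) * c = q * (i + 2) := by exact_mod_cast r3
  have r4 : (c : ℚ) * ((i + 1 + m + 1 : ℕ) : ℚ) = p * (m + 1) := by exact_mod_cast r4
  push_cast at r3 r4 ⊢
  field_simp
  refine mul_left_cancel₀ (show ((m : ℚ) + 1) * (i + 2) ≠ 0 by positivity) ?_
  linear_combination (-(i + m + 2 : ℚ) * a * (m + 1)) * r1 + ((i + m + 2 : ℚ) * c * m) * r2
    + (p * (m + 1 : ℚ)) * r3 + ((i + m + 2 : ℚ) * c) * r4

theorem coeff_nar (n j : ℕ) :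
    (nar n).coeff j = 1 / (n + 1) * (n + 1).choose j * (n + 1).choose (j + 1) := by
  simp only [nar, finsetSum_coeff, coeff_C_mul_X_pow, sum_ite_eq, mem_range]
  split_ifs with hj
  · rfl
  · simp [Nat.choose_eq_zero_of_lt (by omega : n + 1 < j + 1)]

theorem row_apply_zero (n : ℕ) : row n 0 = nar n := by
  ext j
  rcases j with _ | j
  · simp only [row, coeff_sub, coeff_walkPoly, coeff_nar, mul_coeff_zero, coeff_X_zero, zero_mul,
      sub_zero, zero_add, Nat.choose_zero_right, Nat.choose_one_right]
    field_simp
    push_cast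
    ring
  · simp only [row, coeff_sub, coeff_X_mul, coeff_walkPoly, coeff_nar, zero_add, add_comm 2 j,
      ← choose_sq_sub_choose_mul_choose]
    ring

end NarayanaTriangle

open NarayanaTriangle in
/-- Theorem 3.6, initial value: `F_{n+1,n}(z) = N_n(z^2)`. -/
theorem stmt11 (N : ℕ → ℕ → Polynomial ℚ)
    (h00 : N 0 0 = 1) (htop : ∀ n k, n < k → N n k = 0)
    (h0 : ∀ n, N (n + 1) 0 = (Polynomial.X + 1) * N n 0 + Polynomial.X * N n 1)
    (h : ∀ n k, N (n + 1) (k + 1)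
        = N n k + (Polynomial.X + 1) * N n (k + 1) + Polynomial.X * N n (k + 2))
    (F : ℕ → ℕ → Polynomial ℚ)
    (hF : ∀ m n, F m n = ∑ k ∈ Finset.range (n + 1),
        (-Polynomial.X) ^ k * (N n k * N m (k + 1) - N n (k + 1) * N m k))
    (n : ℕ) :
    F (n + 1) n = (nar n).comp (Polynomial.X ^ 2) := by
  have hrow (m : ℕ) : N m = (step X ^ m) (Pi.single 0 1) :=
    eq_step_pow_single h00 (fun k => htop 0 (k + 1) k.succ_pos) h0 h m
  calc F (n + 1) n = skewPairing X (n + 1) (N n) (N (n + 1)) := hF _ _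
    _ = (step ((X : ℚ[X]) ^ 2) ^ n) (Pi.single 0 1) 0 := by
        rw [hrow, hrow, skewPairing_step_pow_succ]
    _ = (nar n).comp (X ^ 2) := by
        rw [← row_apply_zero, ← step_X_pow_single, ← coe_compRingHom_apply, map_step_pow_single,
          coe_compRingHom_apply, X_comp]
end

section
/- Let M_{n,k} = ∑_{j=0}^{n-k} C(j+k−1, j) x^{n−k−j} y^{j} (with M_{n,0}=x^n). Then for all integers m, n ≥ 0: ∑_{k=0}^{min(m,n)} y^{2k} (M_{n,k} M_{m,k+1} − M_{n,k+1} M_{m,k}) = ∑_{k=1}^{max(m,n)} (C(m+n−k, n) − C(m+n−k, m)) x^{k−1} y^{m+n−k}. -/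
/-!
Write `T = triangle x y` for the closed form of `M` over any commutative ring and
`S m n = minorSum x y m n`. Besides Pascal's rule `T (n+1) (k+1) = T n k + y T n (k+1)`, the
closed form satisfies `T (n+1) (k+1) = x T n (k+1) + C(n,k) yⁿ⁻ᵏ`, and Pascal's rule yields the
binomial convolution `∑ⱼ C(n,j) yʲ T m (j+r) = T (m+n) (n+r)`. Hence passing from row `n` to
row `n+1` turns `S m n` into `x S m n + yⁿ⁺² T (m+n) (n+2) - yⁿ T (m+n) n`, and induction on `n`
gives `S m n = yⁿ T (m+n) (n+1) - yᵐ T (m+n) (m+1)`. The right-hand side of the theorem is this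
difference written out coefficientwise.
-/

open Finset MvPolynomial

/-- The entries of the recursive matrix for `σ = (x,y,y,…)`, `τ = (0,0,0,…)`, as
polynomials in `x = X 0`, `y = X 1`. -/
noncomputable def Mexp (n k : ℕ) : MvPolynomial (Fin 2) ℤ :=
  if k ≤ n then
    ∑ j ∈ Finset.range (n - k + 1),
      ((j + k - 1).choose j : MvPolynomial (Fin 2) ℤ)
        * MvPolynomial.X 0 ^ (n - k - j) * MvPolynomial.X 1 ^ j
  else 0

section

variable {R : Type*} [CommRing R] (x y : R)

def triangle (n k : ℕ) : R :=
  if k ≤ n then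
    ∑ j ∈ range (n - k + 1), ((j + k - 1).choose j : R) * x ^ (n - k - j) * y ^ j
  else 0

theorem triangle_eq_zero_of_lt {n k : ℕ} (h : n < k) : triangle x y n k = 0 := by
  simp [triangle, Nat.not_le.mpr h]

@[simp]
theorem triangle_self (n : ℕ) : triangle x y n n = 1 := by
  simp [triangle]

theorem triangle_zero_right (n : ℕ) : triangle x y n 0 = x ^ n := by
  rw [triangle, if_pos n.zero_le, sum_eq_single 0]
  · simp
  · intro j _ hj
    rw [Nat.choose_eq_zero_of_lt (by omega)]
    simp
  · simp

theorem triangle_add_succ (k d : ℕ) :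
    triangle x y (k + d) (k + 1) =
      ∑ j ∈ range d, ((j + k).choose j : R) * x ^ (d - 1 - j) * y ^ j := by
  cases d with
  | zero => simp [triangle_eq_zero_of_lt]
  | succ d =>
    rw [triangle, if_pos (by omega), show k + (d + 1) - (k + 1) + 1 = d + 1 by omega]
    refine sum_congr rfl fun j _ => ?_
    rw [show j + (k + 1) - 1 = j + k by omega,
      show k + (d + 1) - (k + 1) - j = d + 1 - 1 - j by omega]

theorem triangle_succ_succ_eq_mul_add (n k : ℕ) :
    triangle x y (n + 1) (k + 1) = x * triangle x y n (k + 1) + n.choose k * y ^ (n - k) := by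
  rcases lt_or_ge n k with h | h
  · simp [triangle_eq_zero_of_lt x y (Nat.succ_lt_succ h),
      triangle_eq_zero_of_lt x y (h.trans (Nat.lt_succ_self k)), Nat.choose_eq_zero_of_lt h]
  · obtain ⟨d, rfl⟩ := Nat.exists_eq_add_of_le h
    rw [add_assoc, triangle_add_succ, triangle_add_succ, sum_range_succ, mul_sum,
      Nat.add_sub_cancel_left, Nat.choose_symm_add]
    congr 1
    · refine sum_congr rfl fun j hj => ?_
      rw [show d + 1 - 1 - j = (d - 1 - j) + 1 by have := mem_range.mp hj; omega, pow_succ]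
      ring
    · simp [add_comm]

theorem triangle_succ_succ (n k : ℕ) :
    triangle x y (n + 1) (k + 1) = triangle x y n k + y * triangle x y n (k + 1) := by
  induction n generalizing k with
  | zero => cases k <;> simp [triangle_eq_zero_of_lt]
  | succ n ih =>
    have hx := triangle_succ_succ_eq_mul_add x y (n + 1) k
    cases k with
    | zero =>
      have hx₀ := triangle_succ_succ_eq_mul_add x y n 0
      have ih₀ := ih 0
      simp only [triangle_zero_right, Nat.choose_zero_right, Nat.sub_zero, Nat.cast_one,
        zero_add] at hx hx₀ ih₀ ⊢
      linear_combination hx + x * ih₀ - y * hx₀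
    | succ k =>
      have hx₁ := triangle_succ_succ_eq_mul_add x y n k
      have hx₂ := triangle_succ_succ_eq_mul_add x y n (k + 1)
      have hy : (n.choose (k + 1) : R) * y ^ (n - (k + 1)) * y =
          n.choose (k + 1) * y ^ (n - k) := by
        rcases lt_or_ge k n with h | h
        · rw [mul_assoc, ← pow_succ, show n - (k + 1) + 1 = n - k by omega]
        · simp [Nat.choose_eq_zero_of_lt (Nat.lt_succ_of_le h)]
      rw [Nat.choose_succ_succ', Nat.cast_add, Nat.add_sub_add_right] at hx
      linear_combination hx + x * ih (k + 1) - hx₁ - y * hx₂ - hy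

theorem sum_choose_mul_triangle (m n r : ℕ) :
    ∑ j ∈ range (n + 1), (n.choose j : R) * (y ^ j * triangle x y m (j + r)) =
      triangle x y (m + n) (n + r) := by
  induction n generalizing r with
  | zero => simp
  | succ n ih =>
    rw [sum_choose_succ_mul (fun i _ => y ^ i * triangle x y m (i + r)) n, ih,
      show n + 1 + r = n + r + 1 by omega, ← add_assoc, triangle_succ_succ, add_assoc n r 1,
      ← ih (r + 1), mul_sum]
    congr 1
    refine sum_congr rfl fun j _ => ?_
    rw [show j + 1 + r = j + (r + 1) by omega, pow_succ]
    ring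

theorem sum_pow_mul_choose_mul_triangle (m n r : ℕ) :
    ∑ k ∈ range (n + 1), y ^ (2 * k) * (n.choose k * y ^ (n - k)) * triangle x y m (k + r) =
      y ^ n * triangle x y (m + n) (n + r) := by
  rw [← sum_choose_mul_triangle, mul_sum]
  refine sum_congr rfl fun k hk => ?_
  have hy : y ^ (2 * k) * y ^ (n - k) = y ^ n * y ^ k := by
    rw [← pow_add, ← pow_add]
    congr 1
    have := mem_range.mp hk
    omega
  linear_combination (n.choose k * triangle x y m (k + r) : R) * hy

def minorSum (m n : ℕ) : R :=
  ∑ k ∈ range (n + 1),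
    y ^ (2 * k) *
      (triangle x y n k * triangle x y m (k + 1) - triangle x y n (k + 1) * triangle x y m k)

theorem minorSum_succ (m n : ℕ) :
    minorSum x y m (n + 1) =
      x * minorSum x y m n + y ^ (n + 2) * triangle x y (m + n) (n + 2) -
        y ^ n * triangle x y (m + n) n := by
  set d : ℕ → R := fun k => triangle x y (n + 1) k - x * triangle x y n k with hd
  have hd_zero : d 0 = 0 := by simp [hd, triangle_zero_right, pow_succ, mul_comm]
  have hd_succ (k : ℕ) : d (k + 1) = n.choose k * y ^ (n - k) := by
    simp only [hd, triangle_succ_succ_eq_mul_add]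
    ring
  have hext : minorSum x y m n = ∑ k ∈ range (n + 2),
      y ^ (2 * k) * (triangle x y n k * triangle x y m (k + 1) -
        triangle x y n (k + 1) * triangle x y m k) := by
    rw [minorSum, sum_range_succ _ (n + 1), triangle_eq_zero_of_lt x y n.lt_succ_self,
      triangle_eq_zero_of_lt x y (by omega : n < n + 1 + 1)]
    simp
  have hdiff : minorSum x y m (n + 1) - x * minorSum x y m n =
      ∑ k ∈ range (n + 2), y ^ (2 * k) * d k * triangle x y m (k + 1) -
        ∑ k ∈ range (n + 2), y ^ (2 * k) * d (k + 1) * triangle x y m k := by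
    rw [hext, minorSum, mul_sum, ← sum_sub_distrib, ← sum_sub_distrib]
    refine sum_congr rfl fun k _ => ?_
    simp only [hd]
    ring
  have hfirst : ∑ k ∈ range (n + 2), y ^ (2 * k) * d k * triangle x y m (k + 1) =
      y ^ (n + 2) * triangle x y (m + n) (n + 2) := by
    rw [sum_range_succ', hd_zero, mul_zero, zero_mul, add_zero,
      show y ^ (n + 2) * triangle x y (m + n) (n + 2) =
        y ^ 2 * (y ^ n * triangle x y (m + n) (n + 2)) by ring,
      ← sum_pow_mul_choose_mul_triangle, mul_sum]
    refine sum_congr rfl fun k _ => ?_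
    rw [hd_succ, show k + 1 + 1 = k + 2 by omega]
    ring
  have hsecond : ∑ k ∈ range (n + 2), y ^ (2 * k) * d (k + 1) * triangle x y m k =
      y ^ n * triangle x y (m + n) n := by
    rw [sum_range_succ, hd_succ, Nat.choose_succ_self, Nat.cast_zero, zero_mul, mul_zero, zero_mul,
      add_zero]
    simpa only [hd_succ, add_zero] using sum_pow_mul_choose_mul_triangle x y m n 0
  linear_combination hdiff + hfirst - hsecond

theorem minorSum_eq (m n : ℕ) :
    minorSum x y m n =
      y ^ n * triangle x y (m + n) (n + 1) - y ^ m * triangle x y (m + n) (m + 1) := by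
  induction n with
  | zero => simp [minorSum, triangle_eq_zero_of_lt]
  | succ n ih =>
    have hpascal₁ := triangle_succ_succ x y (m + n) (n + 1)
    have hpascal₂ := triangle_succ_succ x y (m + n) n
    have hrec₁ := triangle_succ_succ_eq_mul_add x y (m + n) n
    have hrec₂ := triangle_succ_succ_eq_mul_add x y (m + n) m
    rw [Nat.add_sub_cancel, ← Nat.choose_symm_add] at hrec₁
    rw [Nat.add_sub_cancel_left] at hrec₂
    rw [minorSum_succ, ih, ← add_assoc]
    linear_combination y ^ n * (hpascal₂ - hrec₁) - y ^ (n + 1) * hpascal₁ + y ^ m * hrec₂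

-- For `k > m + n` the truncated `m + n - k` is `0`, and `choose 0 n` vanishes only if `0 < n`.
theorem sum_Icc_choose_mul_pow (m n L : ℕ) (hmL : m ≤ L) (hLmn : L ≤ m + n) :
    ∑ k ∈ Icc 1 L, ((m + n - k).choose n : R) * x ^ (k - 1) * y ^ (m + n - k) =
      y ^ n * triangle x y (m + n) (n + 1) := by
  have htrunc : ∑ k ∈ Icc 1 L, ((m + n - k).choose n : R) * x ^ (k - 1) * y ^ (m + n - k) =
      ∑ k ∈ Icc 1 m, ((m + n - k).choose n : R) * x ^ (k - 1) * y ^ (m + n - k) := by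
    refine (sum_subset (Icc_subset_Icc_right hmL) fun k hkL hkm => ?_).symm
    simp only [mem_Icc] at hkL hkm
    simp [Nat.choose_eq_zero_of_lt (by omega : m + n - k < n)]
  rw [htrunc, add_comm m n, triangle_add_succ, mul_sum]
  refine sum_nbij' (m - ·) (m - ·) (by simp; omega) (by simp; omega) (by simp; omega)
    (by simp; omega) fun k hk => ?_
  obtain ⟨hk₁, hkm⟩ := mem_Icc.mp hk
  rw [show n + m - k = n + (m - k) by omega, Nat.choose_symm_add, add_comm (m - k) n,
    show m - 1 - (m - k) = k - 1 by omega, pow_add]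
  ring

theorem sum_range_min_eq_minorSum (m n : ℕ) :
    ∑ k ∈ range (min m n + 1), y ^ (2 * k) *
        (triangle x y n k * triangle x y m (k + 1) - triangle x y n (k + 1) * triangle x y m k) =
      minorSum x y m n := by
  refine sum_subset (range_subset_range.mpr (by omega)) fun k hkn hk => ?_
  have hmk : m < k := by
    simp only [mem_range] at hkn hk
    omega
  simp [triangle_eq_zero_of_lt x y hmk, triangle_eq_zero_of_lt x y (hmk.trans k.lt_succ_self)]

theorem sum_triangle_minor_eq (m n : ℕ) :
    ∑ k ∈ range (min m n + 1), y ^ (2 * k) *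
        (triangle x y n k * triangle x y m (k + 1) - triangle x y n (k + 1) * triangle x y m k) =
      ∑ k ∈ Icc 1 (max m n),
        (((m + n - k).choose n : R) - ((m + n - k).choose m : R)) * x ^ (k - 1) *
          y ^ (m + n - k) := by
  have hn := sum_Icc_choose_mul_pow x y m n (max m n) (le_max_left m n) (by omega)
  have hm := sum_Icc_choose_mul_pow x y n m (max m n) (le_max_right m n) (by omega)
  rw [add_comm n m] at hm
  simp only [sub_mul, sum_sub_distrib]
  rw [hn, hm, sum_range_min_eq_minorSum, minorSum_eq]

end

/-- Theorem 4.2: weighted sums of 2×2 minors of the triangle `M_{n,k}`. -/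
theorem stmt16 (m n : ℕ) :
    ∑ k ∈ Finset.range (min m n + 1),
        MvPolynomial.X 1 ^ (2 * k) * (Mexp n k * Mexp m (k + 1) - Mexp n (k + 1) * Mexp m k)
      = ∑ k ∈ Finset.Icc 1 (max m n),
          (((m + n - k).choose n : MvPolynomial (Fin 2) ℤ) - ((m + n - k).choose m : MvPolynomial (Fin 2) ℤ))
            * MvPolynomial.X 0 ^ (k - 1) * MvPolynomial.X 1 ^ (m + n - k) :=
  sum_triangle_minor_eq (X 0) (X 1) m n
end

section
/- Let M_{n,k} be the triangle with M_{0,0}=1, M_{n,0} = x M_{n-1,0}, and M_{n,k} = M_{n-1,k-1} + y M_{n-1,k}. Then for all n ≥ 0: ∑_{k=0}^{n} y^{2k} (M_{n,k} M_{n+1,k+1} − M_{n,k+1} M_{n+1,k}) = ∑_{k=0}^{n} C_{n,k} x^k y^{2n−k}, where C_{n,k} = ((k+1)/(n+1)) C(2n−k, n) are the ballot numbers. -/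
/-!
The heart of the proof is the column relation `(x - y) M_{n,k+1} = M_{n,k} - C(n,k) y^(n-k)`.
Substituting it into the recurrence makes every minor linear in the entries of row `n`:
`M_{n,k+1} M_{n+1,k+2} - M_{n,k+2} M_{n+1,k+1}`
  `= C(n,k+1) y^(n-k-1) M_{n,k+1} - C(n,k) y^(n-k) M_{n,k+2}`,
while the minor at `k = 0` is `x^n y^n`. Expanding `M_{n,k+1}` into monomials and summing over `k`,
Vandermonde's identity gives the coefficient `C(2n-1-j, n-j) - C(2n-1-j, n+1)` of `x^j y^(2n-j)`,
and this difference is the ballot number `(j+1)/(n+1) C(2n-j, n)`.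
-/

open Finset MvPolynomial

theorem Nat.sum_range_choose_succ_mul_choose (n m : ℕ) {N : ℕ} (hN : min n (m + 1) ≤ N) :
    ∑ k ∈ range N, n.choose (k + 1) * m.choose k = (n + m).choose (m + 1) := by
  have hvanish : ∀ k ≥ min n (m + 1), n.choose (k + 1) * m.choose k = 0 := by
    intro k hk
    rcases min_le_iff.mp hk with hk | hk
    · rw [Nat.choose_eq_zero_of_lt (by omega), zero_mul]
    · rw [Nat.choose_eq_zero_of_lt (by omega : m < k), mul_zero]
  rw [eventually_constant_sum hvanish hN, ← eventually_constant_sum hvanish (min_le_right _ _),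
    Nat.add_choose_eq, Nat.sum_antidiagonal_succ, Nat.sum_antidiagonal_eq_sum_range_succ
      (fun i l => n.choose (i + 1) * m.choose l)]
  simp only [Nat.choose_succ_self, mul_zero, zero_add]
  refine sum_congr rfl fun k hk => ?_
  rw [Nat.choose_symm (by simpa [Nat.lt_succ_iff] using hk)]

theorem Nat.cast_choose_sub_choose_eq_div_mul_choose {j n : ℕ} (hj : j < n) :
    ((2 * n - 1 - j).choose (n - j) : ℚ) - (2 * n - 1 - j).choose (n + 1)
      = (j + 1) / (n + 1) * (2 * n - j).choose n := by
  obtain ⟨m, rfl⟩ : ∃ m, n = j + m + 1 := ⟨n - j - 1, by omega⟩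
  -- all three binomials are rational multiples of `C(a, m)`
  set a := j + 2 * m + 1
  rw [show 2 * (j + m + 1) - 1 - j = a by omega, show j + m + 1 - j = m + 1 by omega,
    show 2 * (j + m + 1) - j = a + 1 by omega,
    Nat.choose_symm_of_eq_add (show a + 1 = (j + m + 1) + (m + 1) by omega)]
  have h1 := Nat.add_one_mul_choose_eq a m
  have h2 := Nat.choose_succ_right_eq a m
  have h3 := Nat.choose_succ_right_eq a (j + m + 1)
  rw [show a - m = j + m + 1 by omega] at h2
  rw [show a - (j + m + 1) = m by omega,
    Nat.choose_symm_of_eq_add (show a = (j + m + 1) + m by omega)] at h3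
  rw [div_mul_eq_mul_div, eq_div_iff (by positivity)]
  apply mul_left_cancel₀ (by positivity : (m : ℚ) + 1 ≠ 0)
  qify at h1 h2 h3
  simp only [a] at h1 h2 h3 ⊢
  push_cast at h1 h2 h3 ⊢
  linear_combination (↑j + ↑m + 1 + 1) * h2 - (↑m + 1) * h3 + (↑j + 1) * h1

theorem Nat.cast_choose_mul_pow_sub_mul_pow {R : Type*} [CommSemiring R] (y : R) (n k a : ℕ) :
    (n.choose k : R) * y ^ (n - k) * y ^ a = n.choose k * y ^ (n + a - k) := by
  rcases le_or_gt k n with hk | hk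
  · rw [mul_assoc, ← pow_add, Nat.sub_add_comm hk]
  · simp [Nat.choose_eq_zero_of_lt hk]

/-- The Riordan array `(1 / (1 - x t), t / (1 - y t))`, given by its recurrence. -/
structure IsRiordanTriangle {R : Type*} [CommSemiring R] (x y : R) (M : ℕ → ℕ → R) :
    Prop where
  zero_zero : M 0 0 = 1
  zero_succ : ∀ k, M 0 (k + 1) = 0
  succ_zero : ∀ n, M (n + 1) 0 = x * M n 0
  succ_succ : ∀ n k, M (n + 1) (k + 1) = M n k + y * M n (k + 1)

namespace IsRiordanTriangle

section CommSemiring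

variable {R : Type*} [CommSemiring R] {x y : R} {M : ℕ → ℕ → R}
  (hM : IsRiordanTriangle x y M)
include hM

theorem zero_right (n : ℕ) : M n 0 = x ^ n := by
  induction n with
  | zero => rw [hM.zero_zero, pow_zero]
  | succ n ih => rw [hM.succ_zero, ih, pow_succ']

/-- The closed form `M_{n,k+1} = ∑ j, C(n-1-j, k) x^j y^(n-k-1-j)` (paths leaving column `0`
after `j` steps), scaled by `y^(n+k+1)` so that no exponent is truncated. -/
theorem pow_mul_succ (n k : ℕ) :
    y ^ (n + k + 1) * M n (k + 1)
      = ∑ j ∈ range n, ((n - 1 - j).choose k : R) * x ^ j * y ^ (2 * n - j) := by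
  induction n generalizing k with
  | zero => simp [hM.zero_succ]
  | succ n ih =>
    have hshift : ∀ j ∈ range n, ∀ c : R, y ^ 2 * (c * x ^ j * y ^ (2 * n - j))
        = c * x ^ j * y ^ (2 * (n + 1) - j) := by
      intro j hj c
      rw [show 2 * (n + 1) - j = 2 * n - j + 2 by simp at hj; omega, pow_add]
      ring
    rw [sum_range_succ, show n + 1 - 1 - n = 0 by omega, show 2 * (n + 1) - n = n + 2 by omega]
    rcases k with _ | k
    · calc y ^ (n + 1 + 0 + 1) * M (n + 1) (0 + 1)
          = y ^ 2 * (y ^ (n + 0 + 1) * M n (0 + 1)) + x ^ n * y ^ (n + 2) := by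
            rw [hM.succ_succ, hM.zero_right]; ring
        _ = _ := by
          rw [ih 0, mul_sum]
          simp only [Nat.choose_zero_right, Nat.cast_one, one_mul]
          exact congrArg (· + _) (sum_congr rfl fun j hj => by simpa using hshift j hj 1)
    · calc y ^ (n + 1 + (k + 1) + 1) * M (n + 1) (k + 1 + 1)
          = y ^ 2 * (y ^ (n + k + 1) * M n (k + 1))
            + y ^ 2 * (y ^ (n + (k + 1) + 1) * M n (k + 1 + 1)) := by
            rw [hM.succ_succ]; ring
        _ = _ := by
          rw [ih, ih, mul_sum, mul_sum, ← sum_add_distrib, Nat.choose_zero_succ, Nat.cast_zero,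
            zero_mul, zero_mul, add_zero]
          refine sum_congr rfl fun j hj => ?_
          rw [hshift j hj, hshift j hj, show n + 1 - 1 - j = n - 1 - j + 1 by simp at hj; omega,
            Nat.choose_succ_succ', Nat.cast_add]
          ring

end CommSemiring

section CommRing

variable {R : Type*} [CommRing R] {x y : R} {M : ℕ → ℕ → R} (hM : IsRiordanTriangle x y M)
include hM

theorem sub_mul_succ (n k : ℕ) :
    (x - y) * M n (k + 1) = M n k - n.choose k * y ^ (n - k) := by
  induction n generalizing k with
  | zero => rcases k with _ | k <;> simp [hM.zero_zero, hM.zero_succ]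
  | succ n ih =>
    rcases k with _ | k
    · have h0 := ih 0
      simp only [Nat.choose_zero_right, Nat.cast_one, one_mul, Nat.sub_zero] at h0 ⊢
      rw [hM.succ_succ, hM.succ_zero]
      linear_combination y * h0
    · have hy := Nat.cast_choose_mul_pow_sub_mul_pow y n (k + 1) 1
      rw [show n + 1 - (k + 1) = n - k by omega, pow_one] at hy
      rw [hM.succ_succ, hM.succ_succ, Nat.choose_succ_succ', Nat.cast_add,
        Nat.add_sub_add_right]
      linear_combination ih k + y * ih (k + 1) - hy

theorem minor_zero (n : ℕ) :
    M n 0 * M (n + 1) (0 + 1) - M n (0 + 1) * M (n + 1) 0 = x ^ n * y ^ n := by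
  have h0 := hM.sub_mul_succ n 0
  simp only [Nat.choose_zero_right, Nat.cast_one, one_mul, Nat.sub_zero, hM.zero_right] at h0
  rw [hM.succ_succ, hM.succ_zero, hM.zero_right]
  linear_combination (-x ^ n) * h0

theorem pow_mul_minor_succ (n k : ℕ) :
    y ^ (2 * (k + 1)) * (M n (k + 1) * M (n + 1) (k + 1 + 1) - M n (k + 1 + 1) * M (n + 1) (k + 1))
      = n.choose (k + 1) * (y ^ (n + k + 1) * M n (k + 1))
        - n.choose k * (y ^ (n + (k + 1) + 1) * M n (k + 1 + 1)) := by
  have h1 := Nat.cast_choose_mul_pow_sub_mul_pow y n (k + 1) (2 * (k + 1))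
  have h2 := Nat.cast_choose_mul_pow_sub_mul_pow y n k (2 * (k + 1))
  rw [show n + 2 * (k + 1) - (k + 1) = n + k + 1 by omega] at h1
  rw [show n + 2 * (k + 1) - k = n + (k + 1) + 1 by omega] at h2
  rw [hM.succ_succ, hM.succ_succ]
  linear_combination y ^ (2 * (k + 1)) * (M n (k + 1 + 1) * hM.sub_mul_succ n k
    - M n (k + 1) * hM.sub_mul_succ n (k + 1)) + M n (k + 1) * h1 - M n (k + 1 + 1) * h2

theorem sum_pow_mul_minor (n : ℕ) :
    ∑ k ∈ range (n + 1), y ^ (2 * k) * (M n k * M (n + 1) (k + 1) - M n (k + 1) * M (n + 1) k)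
      = ∑ j ∈ range n, (((2 * n - 1 - j).choose (n - j) : R) - (2 * n - 1 - j).choose (n + 1))
          * x ^ j * y ^ (2 * n - j) + x ^ n * y ^ n := by
  rw [sum_range_succ', mul_zero, pow_zero, one_mul, hM.minor_zero]
  simp only [hM.pow_mul_minor_succ, hM.pow_mul_succ, mul_sum, ← sum_sub_distrib]
  rw [sum_comm]
  refine congrArg (· + _) (sum_congr rfl fun j hj => ?_)
  have hj : j < n := mem_range.mp hj
  have hA := Nat.sum_range_choose_succ_mul_choose n (n - 1 - j) (N := n) (by omega)
  have hB := Nat.sum_range_choose_succ_mul_choose (n - 1 - j) n (N := n) (by omega)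
  rw [show n + (n - 1 - j) = 2 * n - 1 - j by omega, show n - 1 - j + 1 = n - j by omega] at hA
  rw [show n - 1 - j + n = 2 * n - 1 - j by omega] at hB
  rw [← hA, ← hB]
  push_cast
  rw [← sum_sub_distrib, sum_mul, sum_mul]
  exact sum_congr rfl fun k _ => by ring

end CommRing

end IsRiordanTriangle

/-- Corollary 4.3: the `m = n+1` case gives the ballot numbers
`C_{n,k} = ((k+1)/(n+1)) C(2n-k,n)`.  Here `x = X 0`, `y = X 1`. -/
theorem stmt17 (M : ℕ → ℕ → MvPolynomial (Fin 2) ℚ)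
    (h00 : M 0 0 = 1) (htop : ∀ n k, n < k → M n k = 0)
    (h0 : ∀ n, M (n + 1) 0 = MvPolynomial.X 0 * M n 0)
    (h : ∀ n k, M (n + 1) (k + 1) = M n k + MvPolynomial.X 1 * M n (k + 1))
    (n : ℕ) :
    ∑ k ∈ Finset.range (n + 1),
        MvPolynomial.X 1 ^ (2 * k) * (M n k * M (n + 1) (k + 1) - M n (k + 1) * M (n + 1) k)
      = ∑ k ∈ Finset.range (n + 1),
          MvPolynomial.C (((k : ℚ) + 1) / ((n : ℚ) + 1) * ((2 * n - k).choose n))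
            * MvPolynomial.X 0 ^ k * MvPolynomial.X 1 ^ (2 * n - k) := by
  have hM : IsRiordanTriangle (X 0) (X 1) M := ⟨h00, fun k => htop 0 (k + 1) k.succ_pos, h0, h⟩
  rw [hM.sum_pow_mul_minor, sum_range_succ]
  refine congrArg₂ (· + ·) ?_ ?_
  · refine sum_congr rfl fun j hj => ?_
    rw [← Nat.cast_choose_sub_choose_eq_div_mul_choose (mem_range.mp hj), map_sub, map_natCast,
      map_natCast]
  · rw [show 2 * n - n = n by omega, Nat.choose_self, Nat.cast_one, mul_one,
      div_self (by positivity), map_one, one_mul]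
end
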